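/- Let M ∈ ℝ^{m×d} with m < d, Ω ∈ ℝ^{p×d}, Λ ⊆ {1,…,p} with |Λ| = ℓ ≥ d−m, and let B ∈ ℝ^{(d−m)×d} be a matrix whose rows form a basis of Null(M). Assume Ω_Λ Bᵀ has full column rank d−m, set P := Ω_Λ Bᵀ (B Ω_Λᵀ Ω_Λ Bᵀ)⁻¹, and let C denote the ∞→∞ operator norm of P · B Ω_{Λᶜ}ᵀ. Let x₀ satisfy Ω_Λ x₀ = 0 and let x̂ be a minimizer of ‖Ωx‖₂ subject to Mx = M x₀. Then ‖Ω_Λ x̂‖_∞ ≤ C · ‖Ω_{Λᶜ} x̂‖_∞. In particular, if C < t ≤ 1 and Ω_{Λᶜ} x̂ ≠ 0, then every index i ∈ {1,…,p} with |(Ω x̂)_i| ≥ t · max_j |(Ω x̂)_j| belongs to Λᶜ (i.e., the first selection step of the Greedy Analysis Pursuit algorithm removes only rows outside the true cosupport Λ). -/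

import Mathlib

/-!
A minimiser `x̂` of `‖Ωx‖₂` on `x₀ + Null(M)` is characterised by the normal equations
`B Ωᵀ Ω x̂ = 0`. Writing `x̂ = x₀ + Bᵀ v` and using `Ω_Λ x₀ = 0` gives `Ω_Λ x̂ = A v` with
`A = Ω_Λ Bᵀ`, and splitting `ΩᵀΩ = Ω_Λᵀ Ω_Λ + Ω_Λᶜᵀ Ω_Λᶜ` turns the normal equations into
`AᵀA v = -B Ω_Λᶜᵀ Ω_Λᶜ x̂`. Since `AᵀA` is invertible, `Ω_Λ x̂ = -P B Ω_Λᶜᵀ Ω_Λᶜ x̂`, and the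
first claim is the `∞ → ∞` operator-norm estimate for this identity. For the second, an index
`i ∈ Λ` would satisfy `|(Ωx̂)ᵢ| ≤ C ‖Ω_Λᶜ x̂‖_∞ < t ‖Ω_Λᶜ x̂‖_∞ ≤ t ‖Ωx̂‖_∞`.
-/

open Matrix Finset

/-- The submatrix of `Ω` consisting of the rows indexed by `Λ`. -/
def rowSub {p d : ℕ} (Ω : Matrix (Fin p) (Fin d) ℝ) (Λ : Finset (Fin p)) :
    Matrix ↥Λ (Fin d) ℝ :=
  Ω.submatrix (fun i => (i : Fin p)) id

/-- `P = Ω_Λ Bᵀ (B Ω_Λᵀ Ω_Λ Bᵀ)⁻¹`: the Moore–Penrose pseudoinverse of `B Ω_Λᵀ`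
when `Ω_Λ Bᵀ` has full column rank. -/
noncomputable def pinvP {p d k : ℕ} (Ω : Matrix (Fin p) (Fin d) ℝ) (Λ : Finset (Fin p))
    (B : Matrix (Fin k) (Fin d) ℝ) : Matrix ↥Λ (Fin k) ℝ :=
  rowSub Ω Λ * B.transpose * ((B * (rowSub Ω Λ).transpose) * (rowSub Ω Λ * B.transpose))⁻¹

section FirstOrderCondition

variable {R ι n κ : Type*} [Field R] [LinearOrder R] [IsStrictOrderedRing R]
  [Fintype ι] [Fintype n]

/-- `t ↦ ‖a + t • b‖²` is minimal at `t = 0`, so its derivative `2 ⟪a, b⟫` there vanishes. -/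
theorem dotProduct_eq_zero_of_forall_le_dotProduct_add_smul {a b : ι → R}
    (h : ∀ t : R, a ⬝ᵥ a ≤ (a + t • b) ⬝ᵥ (a + t • b)) : a ⬝ᵥ b = 0 := by
  have hexpand : ∀ t : R, (a + t • b) ⬝ᵥ (a + t • b) =
      a ⬝ᵥ a + 2 * t * (a ⬝ᵥ b) + t ^ 2 * (b ⬝ᵥ b) := by
    intro t
    simp only [add_dotProduct, dotProduct_add, smul_dotProduct, dotProduct_smul, smul_eq_mul,
      dotProduct_comm b a]
    ring
  have hb : 0 ≤ b ⬝ᵥ b := Fintype.sum_nonneg fun i => mul_self_nonneg (b i)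
  have ht := h (-(a ⬝ᵥ b) / (b ⬝ᵥ b + 1))
  rw [hexpand] at ht
  field_simp at ht
  nlinarith [sq_nonneg (a ⬝ᵥ b)]

theorem dotProduct_mulVec_eq_zero_of_forall_le {M : Matrix κ n R} {Ω : Matrix ι n R}
    {c : κ → R} {xh u : n → R} (hfeas : M *ᵥ xh = c)
    (hmin : ∀ x, M *ᵥ x = c → (Ω *ᵥ xh) ⬝ᵥ (Ω *ᵥ xh) ≤ (Ω *ᵥ x) ⬝ᵥ (Ω *ᵥ x))
    (hu : M *ᵥ u = 0) : (Ω *ᵥ xh) ⬝ᵥ (Ω *ᵥ u) = 0 := by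
  refine dotProduct_eq_zero_of_forall_le_dotProduct_add_smul fun t => ?_
  have h := hmin (xh + t • u) (by rw [mulVec_add, mulVec_smul, hu, smul_zero, add_zero, hfeas])
  rwa [mulVec_add, mulVec_smul] at h

end FirstOrderCondition

section NormalEquations

variable {R m n : Type*} [Field R] [LinearOrder R] [IsStrictOrderedRing R]
  [Fintype m] [Fintype n] [DecidableEq n]

theorem isUnit_det_transpose_mul_self {A : Matrix m n R} (hA : ∀ v, A *ᵥ v = 0 → v = 0) :
    IsUnit (Aᵀ * A).det := by
  rw [isUnit_iff_ne_zero, Ne, ← exists_mulVec_eq_zero_iff]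
  rintro ⟨v, hv, hAv⟩
  have hker : v ∈ LinearMap.ker (Aᵀ * A).mulVecLin := hAv
  rw [ker_mulVecLin_transpose_mul_self] at hker
  exact hv (hA v hker)

theorem mulVec_eq_mul_inv_mulVec_transpose_mul_self {A : Matrix m n R}
    (hA : ∀ v, A *ᵥ v = 0 → v = 0) (v : n → R) :
    A *ᵥ v = (A * (Aᵀ * A)⁻¹) *ᵥ ((Aᵀ * A) *ᵥ v) := by
  rw [mulVec_mulVec, Matrix.mul_assoc, nonsing_inv_mul _ (isUnit_det_transpose_mul_self hA),
    Matrix.mul_one]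

end NormalEquations

section RowSub

variable {p d : ℕ} (Ω : Matrix (Fin p) (Fin d) ℝ) (Λ : Finset (Fin p))

theorem transpose_rowSub_mul_add_compl :
    (rowSub Ω Λ)ᵀ * rowSub Ω Λ + (rowSub Ω Λᶜ)ᵀ * rowSub Ω Λᶜ = Ωᵀ * Ω := by
  ext a b
  simp only [Matrix.add_apply, mul_apply, transpose_apply, rowSub, submatrix_apply, id_eq]
  rw [sum_coe_sort Λ (fun j => Ω j a * Ω j b), sum_coe_sort Λᶜ (fun j => Ω j a * Ω j b),
    sum_add_sum_compl]

theorem pinvP_eq {k : ℕ} (B : Matrix (Fin k) (Fin d) ℝ) :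
    pinvP Ω Λ B = rowSub Ω Λ * Bᵀ * ((rowSub Ω Λ * Bᵀ)ᵀ * (rowSub Ω Λ * Bᵀ))⁻¹ := by
  rw [pinvP, transpose_mul, transpose_transpose]

end RowSub

theorem rowSub_mulVec_eq_neg_pinvP_mul_mulVec_compl {m d p k : ℕ}
    {M : Matrix (Fin m) (Fin d) ℝ} {Ω : Matrix (Fin p) (Fin d) ℝ} {Λ : Finset (Fin p)}
    {B : Matrix (Fin k) (Fin d) ℝ} (hBnull : ∀ i, M *ᵥ B i = 0)
    (hBspan : ∀ z, M *ᵥ z = 0 → z ∈ Submodule.span ℝ (Set.range fun i => B i))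
    (hfullrank : ∀ v, (rowSub Ω Λ * Bᵀ) *ᵥ v = 0 → v = 0)
    {x₀ xh : Fin d → ℝ} (hx₀ : ∀ i ∈ Λ, (Ω *ᵥ x₀) i = 0) (hfeas : M *ᵥ xh = M *ᵥ x₀)
    (hmin : ∀ x, M *ᵥ x = M *ᵥ x₀ → (Ω *ᵥ xh) ⬝ᵥ (Ω *ᵥ xh) ≤ (Ω *ᵥ x) ⬝ᵥ (Ω *ᵥ x)) :
    rowSub Ω Λ *ᵥ xh =
      -((pinvP Ω Λ B * (B * (rowSub Ω Λᶜ)ᵀ)) *ᵥ (rowSub Ω Λᶜ *ᵥ xh)) := by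
  set A := rowSub Ω Λ * Bᵀ
  have hgrad : B *ᵥ ((Ωᵀ * Ω) *ᵥ xh) = 0 := funext fun i => by
    change B i ⬝ᵥ _ = 0
    rw [← mulVec_mulVec, dotProduct_mulVec, vecMul_transpose, dotProduct_comm]
    exact dotProduct_mulVec_eq_zero_of_forall_le hfeas hmin (hBnull i)
  obtain ⟨v, hv⟩ : ∃ v, xh = x₀ + Bᵀ *ᵥ v := by
    obtain ⟨v, hv⟩ := (Submodule.mem_span_range_iff_exists_fun ℝ).1
      (hBspan (xh - x₀) (by rw [mulVec_sub, hfeas, sub_self]))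
    exact ⟨v, by rw [mulVec_transpose, vecMul_eq_sum, hv, add_sub_cancel]⟩
  have hz : rowSub Ω Λ *ᵥ xh = A *ᵥ v := by
    have hx₀' : rowSub Ω Λ *ᵥ x₀ = 0 := funext fun j => hx₀ j j.2
    rw [hv, mulVec_add, hx₀', zero_add, mulVec_mulVec]
  have hnormal : (Aᵀ * A) *ᵥ v = -((B * (rowSub Ω Λᶜ)ᵀ) *ᵥ (rowSub Ω Λᶜ *ᵥ xh)) := by
    rw [← mulVec_mulVec, ← hz, eq_neg_iff_add_eq_zero, ← hgrad,
      ← transpose_rowSub_mul_add_compl Ω Λ, transpose_mul, transpose_transpose]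
    simp only [add_mulVec, mulVec_add, mulVec_mulVec, Matrix.mul_assoc]
  rw [hz, mulVec_eq_mul_inv_mulVec_transpose_mul_self hfullrank, ← pinvP_eq, hnormal,
    mulVec_neg, mulVec_mulVec]

section SupNorm

variable {ι κ : Type*} [Fintype ι] [Fintype κ]

theorem iSup_abs_mulVec_le (Q : Matrix κ ι ℝ) (w : ι → ℝ) :
    ⨆ j, |(Q *ᵥ w) j| ≤ (⨆ j, ∑ i, |Q j i|) * ⨆ i, |w i| := by
  have hw : 0 ≤ ⨆ i, |w i| := Real.iSup_nonneg fun _ => abs_nonneg _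
  refine Real.iSup_le (fun j => ?_)
    (mul_nonneg (Real.iSup_nonneg fun _ => sum_nonneg fun _ _ => abs_nonneg _) hw)
  calc |(Q *ᵥ w) j| = |∑ i, Q j i * w i| := rfl
    _ ≤ ∑ i, |Q j i| * |w i| := by
      simpa only [abs_mul] using abs_sum_le_sum_abs (fun i => Q j i * w i) univ
    _ ≤ ∑ i, |Q j i| * ⨆ i, |w i| := by
      gcongr with i
      exact le_ciSup (Finite.bddAbove_range fun i => |w i|) i
    _ = (∑ i, |Q j i|) * ⨆ i, |w i| := (sum_mul _ _ _).symm
    _ ≤ (⨆ j, ∑ i, |Q j i|) * ⨆ i, |w i| := by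
      gcongr
      exact le_ciSup (Finite.bddAbove_range (fun j => ∑ i, |Q j i|)) j

theorem mem_compl_of_le_abs_of_iSup_le [DecidableEq ι] {y : ι → ℝ} {Λ : Finset ι} {C t : ℝ}
    (hbound : ⨆ j : Λ, |y j| ≤ C * ⨆ j : ↥Λᶜ, |y j|) (hCt : C < t)
    (hne : (fun j : ↥Λᶜ => y j) ≠ 0) {i : ι} (hi : t * ⨆ j, |y j| ≤ |y i|) : i ∈ Λᶜ := by
  by_contra hi'
  have hiΛ : i ∈ Λ := by simpa using hi'
  set W := ⨆ j : ↥Λᶜ, |y j|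
  have hW : 0 < W := by
    obtain ⟨j, hj⟩ := Function.ne_iff.1 hne
    exact (abs_pos.2 hj).trans_le (le_ciSup (Finite.bddAbove_range fun j : ↥Λᶜ => |y j|) j)
  have hyi : |y i| ≤ C * W :=
    (le_ciSup (Finite.bddAbove_range fun j : Λ => |y j|) ⟨i, hiΛ⟩).trans hbound
  have hWy : W ≤ ⨆ j, |y j| :=
    Real.iSup_le (fun j => le_ciSup (Finite.bddAbove_range fun j => |y j|) (j : ι))
    (Real.iSup_nonneg fun _ => abs_nonneg _)
  have ht : 0 < t := by nlinarith [abs_nonneg (y i)]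
  nlinarith [mul_le_mul_of_nonneg_left hWy ht.le]

end SupNorm

theorem GAP_first_step_correct_general
    {m d p : ℕ}
    (M : Matrix (Fin m) (Fin d) ℝ) (Ω : Matrix (Fin p) (Fin d) ℝ)
    (Λ : Finset (Fin p))
    (B : Matrix (Fin (d - m)) (Fin d) ℝ)
    (hBnull : ∀ i : Fin (d - m), M.mulVec (B i) = 0)
    (hBspan : ∀ z : Fin d → ℝ, M.mulVec z = 0 →
      z ∈ Submodule.span ℝ (Set.range fun i : Fin (d - m) => B i))
    (hfullrank : ∀ v : Fin (d - m) → ℝ, (rowSub Ω Λ * B.transpose).mulVec v = 0 → v = 0)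
    (C : ℝ)
    (hC : C = ⨆ j : ↥Λ, ∑ i : ↥Λᶜ, |(pinvP Ω Λ B * (B * (rowSub Ω Λᶜ).transpose)) j i|)
    (x₀ : Fin d → ℝ) (hx₀ : ∀ i ∈ Λ, Ω.mulVec x₀ i = 0)
    (xh : Fin d → ℝ) (hfeas : M.mulVec xh = M.mulVec x₀)
    (hmin : ∀ x : Fin d → ℝ, M.mulVec x = M.mulVec x₀ →
      Real.sqrt (∑ i, (Ω.mulVec xh i) ^ 2) ≤ Real.sqrt (∑ i, (Ω.mulVec x i) ^ 2)) :
    ((⨆ j : ↥Λ, |(rowSub Ω Λ).mulVec xh j|) ≤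
        C * ⨆ i : ↥Λᶜ, |(rowSub Ω Λᶜ).mulVec xh i|)
    ∧
    (∀ t : ℝ, C < t → t ≤ 1 → (rowSub Ω Λᶜ).mulVec xh ≠ 0 →
      ∀ i : Fin p, t * (⨆ j : Fin p, |Ω.mulVec xh j|) ≤ |Ω.mulVec xh i| → i ∈ Λᶜ) := by
  have hmin_dot : ∀ x, M *ᵥ x = M *ᵥ x₀ → (Ω *ᵥ xh) ⬝ᵥ (Ω *ᵥ xh) ≤ (Ω *ᵥ x) ⬝ᵥ (Ω *ᵥ x) := by
    intro x hx
    have h := hmin x hx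
    rw [Real.sqrt_le_sqrt_iff (sum_nonneg fun i _ => sq_nonneg _)] at h
    simpa only [dotProduct, sq] using h
  have hbound : ⨆ j : ↥Λ, |(rowSub Ω Λ *ᵥ xh) j| ≤ C * ⨆ i : ↥Λᶜ, |(rowSub Ω Λᶜ *ᵥ xh) i| := by
    rw [rowSub_mulVec_eq_neg_pinvP_mul_mulVec_compl hBnull hBspan hfullrank hx₀ hfeas hmin_dot, hC]
    simpa only [Pi.neg_apply, abs_neg] using iSup_abs_mulVec_le _ _
  exact ⟨hbound, fun t hCt _ hne i hi =>
    mem_compl_of_le_abs_of_iSup_le (y := Ω *ᵥ xh) hbound hCt hne hi⟩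

/-- with `C` the ∞→∞ operator norm of `P · B Ω_{Λᶜ}ᵀ` (the maximum over
rows of the ℓ¹-norm of the row), if `xh` minimizes `‖Ωx‖₂` subject to `Mx = Mx₀`
where `Ω_Λ x₀ = 0`, then `‖Ω_Λ xh‖_∞ ≤ C · ‖Ω_{Λᶜ} xh‖_∞`; in particular if
`C < t ≤ 1` and `Ω_{Λᶜ} xh ≠ 0`, every index `i` with `|(Ω xh)_i| ≥ t · max_j |(Ω xh)_j|`
belongs to `Λᶜ`. -/
theorem GAP_first_step_correct
    {m d p ℓ : ℕ} (hmd : m < d)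
    (M : Matrix (Fin m) (Fin d) ℝ) (Ω : Matrix (Fin p) (Fin d) ℝ)
    (Λ : Finset (Fin p)) (hcard : Λ.card = ℓ) (hℓ : d - m ≤ ℓ)
    (B : Matrix (Fin (d - m)) (Fin d) ℝ)
    (hBnull : ∀ i : Fin (d - m), M.mulVec (B i) = 0)
    (hBli : LinearIndependent ℝ (fun i : Fin (d - m) => B i))
    (hBspan : ∀ z : Fin d → ℝ, M.mulVec z = 0 →
      z ∈ Submodule.span ℝ (Set.range fun i : Fin (d - m) => B i))
    (hfullrank : ∀ v : Fin (d - m) → ℝ, (rowSub Ω Λ * B.transpose).mulVec v = 0 → v = 0)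
    (C : ℝ)
    (hC : C = ⨆ j : ↥Λ, ∑ i : ↥Λᶜ, |(pinvP Ω Λ B * (B * (rowSub Ω Λᶜ).transpose)) j i|)
    (x₀ : Fin d → ℝ) (hx₀ : ∀ i ∈ Λ, Ω.mulVec x₀ i = 0)
    (xh : Fin d → ℝ) (hfeas : M.mulVec xh = M.mulVec x₀)
    (hmin : ∀ x : Fin d → ℝ, M.mulVec x = M.mulVec x₀ →
      Real.sqrt (∑ i, (Ω.mulVec xh i) ^ 2) ≤ Real.sqrt (∑ i, (Ω.mulVec x i) ^ 2)) :
    ((⨆ j : ↥Λ, |(rowSub Ω Λ).mulVec xh j|) ≤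
        C * ⨆ i : ↥Λᶜ, |(rowSub Ω Λᶜ).mulVec xh i|)
    ∧
    (∀ t : ℝ, C < t → t ≤ 1 → (rowSub Ω Λᶜ).mulVec xh ≠ 0 →
      ∀ i : Fin p, t * (⨆ j : Fin p, |Ω.mulVec xh j|) ≤ |Ω.mulVec xh i| → i ∈ Λᶜ) :=
  GAP_first_step_correct_general M Ω Λ B hBnull hBspan hfullrank C hC x₀ hx₀ xh hfeas hmin
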